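/- Let f₁,…,f_s : ℝ^d → ℝ be differentiable and convex, with each f_j being L_j-smooth for some L_j > 0; let f = (1/s)·Σⱼ₌₁ˢ f_j and L̄ = (1/s)·Σⱼ₌₁ˢ L_j. Fix x, w ∈ ℝ^d. Let J₁,…,J_K be i.i.d. random indices in Fin s with P(J = j) = L_j/(s·L̄), and define the random vector g = (1/K)·Σₘ₌₁ᴷ (L̄/L_{Jₘ})·(∇f_{Jₘ}(x) − ∇f_{Jₘ}(w)) + ∇f(w). Then E[g] = ∇f(x) and E[‖g − ∇f(x)‖²] ≤ 2·max{L, L̄/K}·(f(w) − f(x) − ⟨∇f(x), w − x⟩) for any L > 0 such that f is L-smooth; in fact E[‖g − ∇f(x)‖²] ≤ (2L̄/K)·(f(w) − f(x) − ⟨∇f(x), w − x⟩). -/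

import Mathlib

open MeasureTheory ProbabilityTheory
open scoped RealInnerProductSpace ENNReal

/-!
Write `Y_j = (L̄ / L_j) • (∇f_j x - ∇f_j w)` and `p_j = L_j / (s L̄)`, so that `g - ∇f x` is the
minibatch mean of the centred samples `Y_{J_m} - ∑ p_j • Y_j` and `∑ p_j • Y_j = ∇f x - ∇f w`.
Independence kills the cross terms, so the variance is `1/K` times that of a single sample,
which is at most its second moment `∑ p_j ‖Y_j‖² = (L̄ / s) ∑ ‖∇f_j x - ∇f_j w‖² / L_j`.
Co-coercivity of the gradient of a convex `L_j`-smooth function bounds the `j`-th term by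
`2 L_j` times the Bregman divergence of `f_j`, and these average to that of `f`.
-/

section Convex

variable {E : Type*} [NormedAddCommGroup E] [InnerProductSpace ℝ E] [CompleteSpace E]

noncomputable def bregmanDiv (h : E → ℝ) (x w : E) : ℝ := h w - h x - ⟪gradient h x, w - x⟫

theorem ConvexOn.add_inner_gradient_le {h : E → ℝ} (hc : ConvexOn ℝ Set.univ h) {u : E}
    (hd : DifferentiableAt ℝ h u) (v : E) :
    h u + ⟪gradient h u, v - u⟫ ≤ h v := by
  have hline : ConvexOn ℝ Set.univ (h ∘ AffineMap.lineMap (k := ℝ) u v) := by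
    simpa using hc.comp_affineMap (AffineMap.lineMap u v : ℝ →ᵃ[ℝ] E)
  have hderiv : HasDerivAt (h ∘ AffineMap.lineMap (k := ℝ) u v) (fderiv ℝ h u (v - u)) 0 := by
    have hd' : HasFDerivAt h (fderiv ℝ h u) (AffineMap.lineMap u v (0 : ℝ)) := by
      simpa using hd.hasFDerivAt
    exact hd'.comp_hasDerivAt 0 (AffineMap.hasDerivAt_lineMap (a := u) (b := v) (x := 0))
  have := hline.le_slope_of_hasDerivAt (Set.mem_univ 0) (Set.mem_univ 1) one_pos hderiv
  simp only [slope_def_field, Function.comp_apply, AffineMap.lineMap_apply_one,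
    AffineMap.lineMap_apply_zero, sub_zero, div_one, inner_gradient_left] at this ⊢
  linarith

theorem ConvexOn.bregmanDiv_nonneg {h : E → ℝ} (hc : ConvexOn ℝ Set.univ h) {x : E}
    (hd : DifferentiableAt ℝ h x) (w : E) : 0 ≤ bregmanDiv h x w := by
  have := hc.add_inner_gradient_le hd w
  unfold bregmanDiv
  linarith

theorem ConvexOn.norm_sub_gradient_sq_le_bregmanDiv {h : E → ℝ} (hc : ConvexOn ℝ Set.univ h)
    (hd : Differentiable ℝ h) {L : ℝ} (hL : 0 < L)
    (hsmooth : ∀ u v, h v ≤ h u + ⟪gradient h u, v - u⟫ + L / 2 * ‖v - u‖ ^ 2) (x w : E) :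
    ‖gradient h x - gradient h w‖ ^ 2 ≤ 2 * L * bregmanDiv h x w := by
  -- compare the convexity lower bound with the smoothness upper bound at a gradient step from `w`
  set G := gradient h w - gradient h x
  have hlower := hc.add_inner_gradient_le (hd x) (w - L⁻¹ • G)
  have hupper := hsmooth w (w - L⁻¹ • G)
  have hG : L⁻¹ * ⟪gradient h w, G⟫ - L⁻¹ * ⟪gradient h x, G⟫ = L⁻¹ * ‖G‖ ^ 2 := by
    rw [← mul_sub, ← inner_sub_left, real_inner_self_eq_norm_sq]
  rw [show w - L⁻¹ • G - x = (w - x) - L⁻¹ • G by abel, inner_sub_right,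
    real_inner_smul_right] at hlower
  rw [show w - L⁻¹ • G - w = -(L⁻¹ • G) by abel, inner_neg_right, real_inner_smul_right,
    norm_neg, norm_smul, Real.norm_of_nonneg (inv_nonneg.2 hL.le)] at hupper
  rw [norm_sub_rev, bregmanDiv]
  have key : L⁻¹ / 2 * ‖G‖ ^ 2 ≤ h w - h x - ⟪gradient h x, w - x⟫ := by
    have : L / 2 * (L⁻¹ * ‖G‖) ^ 2 = L⁻¹ / 2 * ‖G‖ ^ 2 := by field_simp
    linarith
  calc ‖G‖ ^ 2 = 2 * L * (L⁻¹ / 2 * ‖G‖ ^ 2) := by field_simp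
    _ ≤ _ := by gcongr

theorem gradient_const_mul_sum {ι : Type*} (s : Finset ι) {f : ι → E → ℝ} {u : E}
    (hf : ∀ j ∈ s, DifferentiableAt ℝ (f j) u) (c : ℝ) :
    gradient (fun v => c * ∑ j ∈ s, f j v) u = c • ∑ j ∈ s, gradient (f j) u := by
  have hsum := (HasFDerivAt.fun_sum fun j hj => (hf j hj).hasFDerivAt).const_mul c
  rw [gradient, hsum.fderiv, map_smul, map_sum]
  rfl

theorem bregmanDiv_const_mul_sum {ι : Type*} (s : Finset ι) {f : ι → E → ℝ} {x : E}
    (hf : ∀ j ∈ s, DifferentiableAt ℝ (f j) x) (c : ℝ) (w : E) :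
    bregmanDiv (fun v => c * ∑ j ∈ s, f j v) x w = c * ∑ j ∈ s, bregmanDiv (f j) x w := by
  simp only [bregmanDiv, gradient_const_mul_sum s hf, real_inner_smul_left, sum_inner,
    Finset.sum_sub_distrib]
  ring

end Convex

section ImportanceSampling

variable {E : Type*} [NormedAddCommGroup E] [InnerProductSpace ℝ E] [CompleteSpace E]

theorem sum_importance_sampling_smul_gradient_sub {ι : Type*} [Fintype ι] {f : ι → E → ℝ}
    {Lf : ι → ℝ} (hLf : ∀ j, Lf j ≠ 0) {Lbar : ℝ} (hLbar : Lbar ≠ 0)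
    (hdiff : ∀ j, Differentiable ℝ (f j)) (c : ℝ) (x w : E) :
    ∑ j, (Lf j / (c * Lbar)) • (Lbar / Lf j) • (gradient (f j) x - gradient (f j) w)
      = gradient (fun u => c⁻¹ * ∑ j, f j u) x - gradient (fun u => c⁻¹ * ∑ j, f j u) w := by
  rw [gradient_const_mul_sum _ (fun j _ => (hdiff j).differentiableAt),
    gradient_const_mul_sum _ (fun j _ => (hdiff j).differentiableAt), ← smul_sub,
    ← Finset.sum_sub_distrib, Finset.smul_sum]
  refine Finset.sum_congr rfl fun j _ => ?_
  rw [smul_smul]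
  congr 1
  field_simp [hLf j]

theorem sum_importance_sampling_mul_norm_sq_le {ι : Type*} [Fintype ι] {f : ι → E → ℝ}
    {Lf : ι → ℝ} (hLf : ∀ j, 0 < Lf j) (hdiff : ∀ j, Differentiable ℝ (f j))
    (hconv : ∀ j, ConvexOn ℝ Set.univ (f j))
    (hsmooth : ∀ j u v, f j v ≤ f j u + ⟪gradient (f j) u, v - u⟫ + Lf j / 2 * ‖v - u‖ ^ 2)
    {c Lbar : ℝ} (hc : 0 < c) (hLbar : 0 ≤ Lbar) (x w : E) :
    ∑ j, Lf j / (c * Lbar) * ‖(Lbar / Lf j) • (gradient (f j) x - gradient (f j) w)‖ ^ 2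
      ≤ 2 * Lbar * bregmanDiv (fun u => c⁻¹ * ∑ j, f j u) x w := by
  rw [bregmanDiv_const_mul_sum _ (fun j _ => (hdiff j).differentiableAt), Finset.mul_sum,
    Finset.mul_sum]
  refine Finset.sum_le_sum fun j _ => ?_
  have := hLf j
  have hcoco := (hconv j).norm_sub_gradient_sq_le_bregmanDiv (hdiff j) (hLf j) (hsmooth j) x w
  calc Lf j / (c * Lbar) * ‖(Lbar / Lf j) • (gradient (f j) x - gradient (f j) w)‖ ^ 2
      = Lbar / (c * Lf j) * ‖gradient (f j) x - gradient (f j) w‖ ^ 2 := by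
        rw [norm_smul, mul_pow, Real.norm_eq_abs, sq_abs]
        rcases hLbar.eq_or_lt with rfl | hLbar
        · simp
        · field_simp
    _ ≤ Lbar / (c * Lf j) * (2 * Lf j * bregmanDiv (f j) x w) := by gcongr
    _ = 2 * Lbar * (c⁻¹ * bregmanDiv (f j) x w) := by field_simp

end ImportanceSampling

section WeightedMean

variable {E : Type*} [NormedAddCommGroup E] [InnerProductSpace ℝ E]

theorem Finset.sum_mul_norm_sub_sum_smul_sq {ι : Type*} (s : Finset ι) {p : ι → ℝ}
    (hp : ∑ i ∈ s, p i = 1) (Y : ι → E) :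
    ∑ i ∈ s, p i * ‖Y i - ∑ j ∈ s, p j • Y j‖ ^ 2
      = ∑ i ∈ s, p i * ‖Y i‖ ^ 2 - ‖∑ j ∈ s, p j • Y j‖ ^ 2 := by
  set μ := ∑ j ∈ s, p j • Y j
  have hcross : ∑ i ∈ s, p i * ⟪Y i, μ⟫ = ‖μ‖ ^ 2 := by
    simp only [← real_inner_smul_left, ← sum_inner, μ, real_inner_self_eq_norm_sq]
  simp only [norm_sub_sq_real, mul_add, mul_sub, Finset.sum_add_distrib, Finset.sum_sub_distrib,
    ← Finset.sum_mul, hp, mul_left_comm _ (2 : ℝ), ← Finset.mul_sum, hcross]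
  ring

end WeightedMean

section FiniteValued

variable {Ω : Type*} {mΩ : MeasurableSpace Ω} {μ : Measure Ω} [IsFiniteMeasure μ]
  {ι κ : Type*} [Fintype ι] [MeasurableSpace ι] [MeasurableSingletonClass ι]
  [Fintype κ] [MeasurableSpace κ] [MeasurableSingletonClass κ]

theorem integrable_comp_of_fintype {E : Type*} [NormedAddCommGroup E] {T : Ω → ι}
    (hT : Measurable T) (φ : ι → E) : Integrable (fun ω => φ (T ω)) μ :=
  Integrable.of_finite.comp_measurable hT

theorem integral_comp_of_fintype {E : Type*} [NormedAddCommGroup E] [NormedSpace ℝ E]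
    [CompleteSpace E] {T : Ω → ι} (hT : Measurable T) (φ : ι → E) :
    ∫ ω, φ (T ω) ∂μ = ∑ i, μ.real (T ⁻¹' {i}) • φ i := by
  rw [← integral_map hT.aemeasurable (Integrable.of_finite).aestronglyMeasurable,
    integral_fintype Integrable.of_finite]
  simp only [map_measureReal_apply hT (measurableSet_singleton _)]

variable {E : Type*} [NormedAddCommGroup E] [InnerProductSpace ℝ E] [CompleteSpace E]

theorem ProbabilityTheory.IndepFun.integral_inner_comp {T : Ω → ι} {T' : Ω → κ}
    (hT : Measurable T) (hT' : Measurable T') (hind : IndepFun T T' μ) (φ : ι → E) (ψ : κ → E) :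
    ∫ ω, ⟪φ (T ω), ψ (T' ω)⟫ ∂μ = ⟪∫ ω, φ (T ω) ∂μ, ∫ ω, ψ (T' ω) ∂μ⟫ := by
  have hjoint : ∀ i j, μ.real ((fun ω => (T ω, T' ω)) ⁻¹' {(i, j)})
      = μ.real (T ⁻¹' {i}) * μ.real (T' ⁻¹' {j}) := fun i j => by
    rw [← Set.singleton_prod_singleton, Set.mk_preimage_prod, measureReal_def,
      hind.measure_inter_preimage_eq_mul _ _ (measurableSet_singleton i)
        (measurableSet_singleton j), ENNReal.toReal_mul, measureReal_def, measureReal_def]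
  rw [integral_comp_of_fintype (hT.prodMk hT') (fun q => ⟪φ q.1, ψ q.2⟫),
    integral_comp_of_fintype hT, integral_comp_of_fintype hT', Fintype.sum_prod_type, sum_inner]
  simp only [hjoint, inner_sum, real_inner_smul_left, real_inner_smul_right, smul_eq_mul]
  exact Finset.sum_congr rfl fun i _ => Finset.sum_congr rfl fun j _ => by ring

theorem integral_norm_sum_sq_of_pairwise_indepFun {K : Type*} [Fintype K] {J : K → Ω → ι}
    (hJ : ∀ m, Measurable (J m)) (hind : Pairwise fun m m' => IndepFun (J m) (J m') μ)
    (Z : ι → E) (hZ : ∀ m, ∫ ω, Z (J m ω) ∂μ = 0) :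
    ∫ ω, ‖∑ m, Z (J m ω)‖ ^ 2 ∂μ = ∑ m, ∫ ω, ‖Z (J m ω)‖ ^ 2 ∂μ := by
  have hint : ∀ m m', Integrable (fun ω => ⟪Z (J m ω), Z (J m' ω)⟫) μ := fun m m' =>
    integrable_comp_of_fintype ((hJ m).prodMk (hJ m')) fun q => ⟪Z q.1, Z q.2⟫
  have hcross : ∀ m m', m ≠ m' → ∫ ω, ⟪Z (J m ω), Z (J m' ω)⟫ ∂μ = 0 := fun m m' hne => by
    rw [(hind hne).integral_inner_comp (hJ m) (hJ m'), hZ, inner_zero_left]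
  simp only [← real_inner_self_eq_norm_sq, sum_inner (𝕜 := ℝ), inner_sum (𝕜 := ℝ)]
  rw [integral_finsetSum _ fun m _ => integrable_finsetSum _ fun m' _ => hint m m']
  refine Finset.sum_congr rfl fun m _ => ?_
  rw [integral_finsetSum _ fun m' _ => hint m m', Finset.sum_eq_single m
    (fun m' _ hne => hcross m m' hne.symm) (by simp)]

end FiniteValued

section Minibatch

variable {Ω : Type*} {mΩ : MeasurableSpace Ω} {μ : Measure Ω} [IsProbabilityMeasure μ]
  {ι : Type*} [Fintype ι] [MeasurableSpace ι] [MeasurableSingletonClass ι]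
  {E : Type*} [NormedAddCommGroup E] [InnerProductSpace ℝ E] [CompleteSpace E]
  {K : ℕ} {J : Fin K → Ω → ι} {p : ι → ℝ}

theorem sum_eq_one_of_law (hK : 0 < K) (hJ : ∀ m, Measurable (J m))
    (hlaw : ∀ m i, μ.real (J m ⁻¹' {i}) = p i) : ∑ i, p i = 1 := by
  simpa [hlaw] using (integral_comp_of_fintype (μ := μ) (hJ ⟨0, hK⟩) fun _ => (1 : ℝ)).symm

theorem integral_minibatch_mean (hK : 0 < K) (hJ : ∀ m, Measurable (J m))
    (hlaw : ∀ m i, μ.real (J m ⁻¹' {i}) = p i) (Y : ι → E) :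
    ∫ ω, (1 / (K : ℝ)) • ∑ m, Y (J m ω) ∂μ = ∑ i, p i • Y i := by
  rw [integral_smul, integral_finsetSum _ fun m _ => integrable_comp_of_fintype (hJ m) Y]
  simp only [integral_comp_of_fintype (hJ _), hlaw, Finset.sum_const, Finset.card_univ,
    Fintype.card_fin, ← Nat.cast_smul_eq_nsmul ℝ, smul_smul,
    one_div_mul_cancel (Nat.cast_ne_zero.2 hK.ne' : (K : ℝ) ≠ 0), one_smul]

theorem integral_norm_minibatch_mean_sub_sq (hK : 0 < K) (hJ : ∀ m, Measurable (J m))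
    (hind : Pairwise fun m m' => IndepFun (J m) (J m') μ)
    (hlaw : ∀ m i, μ.real (J m ⁻¹' {i}) = p i) (Y : ι → E) :
    ∫ ω, ‖(1 / (K : ℝ)) • ∑ m, Y (J m ω) - ∑ i, p i • Y i‖ ^ 2 ∂μ
      = 1 / (K : ℝ) * (∑ i, p i * ‖Y i‖ ^ 2 - ‖∑ i, p i • Y i‖ ^ 2) := by
  have hK' : (K : ℝ) ≠ 0 := Nat.cast_ne_zero.2 hK.ne'
  have hp1 := sum_eq_one_of_law hK hJ hlaw
  set Z : ι → E := fun i => Y i - ∑ j, p j • Y j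
  have hcentre : ∀ ω, (1 / (K : ℝ)) • ∑ m, Y (J m ω) - ∑ i, p i • Y i
      = (1 / (K : ℝ)) • ∑ m, Z (J m ω) := fun ω => by
    simp only [Z, Finset.sum_sub_distrib, Finset.sum_const, Finset.card_univ, Fintype.card_fin,
      ← Nat.cast_smul_eq_nsmul ℝ, smul_sub, smul_smul, one_div_mul_cancel hK', one_smul]
  have hmeanZ : ∀ m, ∫ ω, Z (J m ω) ∂μ = 0 := fun m => by
    rw [integral_comp_of_fintype (hJ m)]
    simp only [hlaw, Z, smul_sub, Finset.sum_sub_distrib, ← Finset.sum_smul, hp1, one_smul,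
      sub_self]
  simp_rw [hcentre, norm_smul, mul_pow, Real.norm_eq_abs, sq_abs]
  rw [integral_const_mul, integral_norm_sum_sq_of_pairwise_indepFun hJ hind Z hmeanZ,
    ← Finset.sum_mul_norm_sub_sum_smul_sq _ hp1]
  simp only [integral_comp_of_fintype (hJ _) (fun i => ‖Z i‖ ^ 2), hlaw, smul_eq_mul,
    Finset.sum_const, Finset.card_univ, Fintype.card_fin, nsmul_eq_mul]
  field_simp
  rfl

end Minibatch

/-- **Variance bound for the importance-sampled minibatch gradient estimator of
DVPL-Katyusha**: let `f₁, …, f_s : ℝ^d → ℝ` be differentiable and convex, with `f_j` being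
`L_j`-smooth, `f = (1/s)·∑ⱼ f_j`, `L̄ = (1/s)·∑ⱼ L_j`. If `J₁, …, J_K` are i.i.d. indices
with `P(J = j) = L_j/(s·L̄)` and
`g = (1/K)·∑ₘ (L̄/L_{Jₘ})·(∇f_{Jₘ}(x) − ∇f_{Jₘ}(w)) + ∇f(w)`, then `E[g] = ∇f(x)`,
`E[‖g − ∇f(x)‖²] ≤ 2·max{L, L̄/K}·(f(w) − f(x) − ⟨∇f(x), w − x⟩)` for any `L > 0` such that
`f` is `L`-smooth, and in fact
`E[‖g − ∇f(x)‖²] ≤ (2L̄/K)·(f(w) − f(x) − ⟨∇f(x), w − x⟩)`. -/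
theorem dvpl_katyusha_variance_bound
    {s d K : ℕ} (hs : 0 < s) (hK : 0 < K)
    (f : Fin s → EuclideanSpace ℝ (Fin d) → ℝ)
    (Lf : Fin s → ℝ) (hLf : ∀ j, 0 < Lf j)
    (hdiff : ∀ j, Differentiable ℝ (f j))
    (hconv : ∀ j, ConvexOn ℝ Set.univ (f j))
    (hsmooth : ∀ j, ∀ u v : EuclideanSpace ℝ (Fin d),
      f j v ≤ f j u + ⟪gradient (f j) u, v - u⟫ + Lf j / 2 * ‖v - u‖ ^ 2)
    (F : EuclideanSpace ℝ (Fin d) → ℝ)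
    (hF : F = fun u => (1 / (s : ℝ)) * ∑ j, f j u)
    (Lbar : ℝ) (hLbar : Lbar = (1 / (s : ℝ)) * ∑ j, Lf j)
    (x w : EuclideanSpace ℝ (Fin d))
    {Ω : Type*} [MeasureSpace Ω] [IsProbabilityMeasure (ℙ : Measure Ω)]
    (J : Fin K → Ω → Fin s)
    (hJmeas : ∀ m, Measurable (J m))
    (hJindep : iIndepFun J ℙ)
    (hJlaw : ∀ m, ∀ j : Fin s,
      ℙ {ω | J m ω = j} = ENNReal.ofReal (Lf j / ((s : ℝ) * Lbar)))
    (g : Ω → EuclideanSpace ℝ (Fin d))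
    (hg : ∀ ω, g ω = (1 / (K : ℝ)) •
        ∑ m : Fin K, (Lbar / Lf (J m ω)) •
          (gradient (f (J m ω)) x - gradient (f (J m ω)) w)
      + gradient F w) :
    (∫ ω, g ω ∂ℙ = gradient F x) ∧
    (∀ L : ℝ, 0 < L →
      (∀ u v : EuclideanSpace ℝ (Fin d),
        F v ≤ F u + ⟪gradient F u, v - u⟫ + L / 2 * ‖v - u‖ ^ 2) →
      ∫ ω, ‖g ω - gradient F x‖ ^ 2 ∂ℙ
        ≤ 2 * max L (Lbar / (K : ℝ)) * (F w - F x - ⟪gradient F x, w - x⟫)) ∧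
    (∫ ω, ‖g ω - gradient F x‖ ^ 2 ∂ℙ
      ≤ 2 * Lbar / (K : ℝ) * (F w - F x - ⟪gradient F x, w - x⟫)) := by
  have : Nonempty (Fin s) := Fin.pos_iff_nonempty.mp hs
  have hLbar_pos : 0 < Lbar := by
    have := Finset.sum_pos (fun j _ => hLf j) Finset.univ_nonempty
    rw [hLbar]; positivity
  have hlaw : ∀ m j, (ℙ : Measure Ω).real (J m ⁻¹' {j}) = Lf j / (s * Lbar) := fun m j => by
    rw [measureReal_def, show J m ⁻¹' {j} = {ω | J m ω = j} from rfl, hJlaw,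
      ENNReal.toReal_ofReal]
    exact div_nonneg (hLf j).le (by positivity)
  rw [one_div] at hF
  set Y : Fin s → EuclideanSpace ℝ (Fin d) :=
    fun j => (Lbar / Lf j) • (gradient (f j) x - gradient (f j) w)
  have hmeanY : ∑ j, (Lf j / (s * Lbar)) • Y j = gradient F x - gradient F w := by
    rw [hF]
    exact sum_importance_sampling_smul_gradient_sub (fun j => (hLf j).ne') hLbar_pos.ne' hdiff _ x w
  have hg' : ∀ ω, g ω = (1 / (K : ℝ)) • ∑ m, Y (J m ω) + gradient F w := hg
  have hint : Integrable (fun ω => (1 / (K : ℝ)) • ∑ m, Y (J m ω)) ℙ :=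
    integrable_comp_of_fintype (measurable_pi_lambda _ hJmeas)
      fun j => (1 / (K : ℝ)) • ∑ m, Y (j m)
  have hmean : ∫ ω, g ω ∂ℙ = gradient F x := by
    rw [integral_congr_ae (ae_of_all _ hg'), integral_add hint (integrable_const _),
      integral_minibatch_mean hK hJmeas hlaw, hmeanY, integral_const, probReal_univ, one_smul,
      sub_add_cancel]
  have hbound : ∫ ω, ‖g ω - gradient F x‖ ^ 2 ∂ℙ ≤ 2 * Lbar / K * bregmanDiv F x w := by
    calc ∫ ω, ‖g ω - gradient F x‖ ^ 2 ∂ℙ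
        = ∫ ω, ‖(1 / (K : ℝ)) • ∑ m, Y (J m ω) - ∑ j, (Lf j / (s * Lbar)) • Y j‖ ^ 2 ∂ℙ := by
          simp_rw [hg', hmeanY, sub_sub_eq_add_sub]
      _ = 1 / (K : ℝ) * (∑ j, Lf j / (s * Lbar) * ‖Y j‖ ^ 2
            - ‖∑ j, (Lf j / (s * Lbar)) • Y j‖ ^ 2) :=
          integral_norm_minibatch_mean_sub_sq hK hJmeas (fun m m' hne => hJindep.indepFun hne)
            hlaw Y
      _ ≤ 1 / (K : ℝ) * (2 * Lbar * bregmanDiv F x w) := by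
          gcongr
          refine (sub_le_self _ (sq_nonneg _)).trans ?_
          rw [hF]
          exact sum_importance_sampling_mul_norm_sq_le hLf hdiff hconv hsmooth (by positivity)
            hLbar_pos.le x w
      _ = 2 * Lbar / K * bregmanDiv F x w := by ring
  have hbreg_nonneg : 0 ≤ bregmanDiv F x w := by
    rw [hF, bregmanDiv_const_mul_sum _ (fun j _ => (hdiff j).differentiableAt)]
    exact mul_nonneg (by positivity)
      (Finset.sum_nonneg fun j _ => (hconv j).bregmanDiv_nonneg (hdiff j x) w)
  refine ⟨hmean, fun L _ _ => hbound.trans (mul_le_mul_of_nonneg_right ?_ hbreg_nonneg), hbound⟩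
  rw [mul_div_assoc]
  gcongr
  exact le_max_right _ _
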